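/- arXiv:2103.08329 — 2 statements merged into one kernel-verified Lean document; each statement's English description precedes it below -/
import Mathlib

section
/- For every integer p with p > t/π (t a positive even integer), the Fourier coefficient c_p(t) = 2∫₀¹ x^t cos(pπx) dx satisfies |c_p(t)| ≤ 2t/(p²π² − t²). -/
/-! Write `I n = ∫₀¹ xⁿ cos (a x) dx` with `a = pπ`. Integrating by parts twice gives
`I (n + 2) = (n + 2) cos a / a² - (n + 2)(n + 1) / a² · I n`, the `sin a` boundary terms vanishing,
and `I 0 = sin a / a = 0`. Induction along the even integers then propagates the bound
`|I n| ≤ n / (a² - n²)`, since `(n + 2) / a² · (1 + (n + 1) n / (a² - n²)) ≤ (n + 2) / (a² - (n + 2)²)`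
as soon as `(n + 2)² < a²`. -/

open Real intervalIntegral

noncomputable def cosMoment (a : ℝ) (n : ℕ) : ℝ :=
  ∫ x in (0 : ℝ)..1, x ^ n * cos (a * x)

noncomputable def sinMoment (a : ℝ) (n : ℕ) : ℝ :=
  ∫ x in (0 : ℝ)..1, x ^ n * sin (a * x)

section Moments

variable {a : ℝ}

theorem hasDerivAt_sin_mul_div (ha : a ≠ 0) (x : ℝ) :
    HasDerivAt (fun y => sin (a * y) / a) (cos (a * x)) x := by
  simpa [ha] using ((hasDerivAt_id' x).const_mul a).sin.div_const a

theorem hasDerivAt_neg_cos_mul_div (ha : a ≠ 0) (x : ℝ) :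
    HasDerivAt (fun y => -cos (a * y) / a) (sin (a * x)) x := by
  simpa [ha] using ((hasDerivAt_id' x).const_mul a).cos.neg.div_const a

theorem cosMoment_zero (ha : a ≠ 0) : cosMoment a 0 = sin a / a := by
  simp only [cosMoment, pow_zero, one_mul]
  rw [integral_eq_sub_of_hasDerivAt (fun x _ => hasDerivAt_sin_mul_div ha x)
    ((by fun_prop : Continuous fun x => cos (a * x)).intervalIntegrable _ _)]
  simp

theorem cosMoment_succ (ha : a ≠ 0) (k : ℕ) :
    cosMoment a (k + 1) = sin a / a - (k + 1) / a * sinMoment a k := by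
  have hrest : ∫ x in (0 : ℝ)..1, (k + 1) * x ^ k * (sin (a * x) / a)
      = (k + 1) / a * sinMoment a k := by
    rw [sinMoment, ← integral_const_mul]
    exact integral_congr fun x _ => by ring
  rw [cosMoment, integral_mul_deriv_eq_deriv_mul (fun x _ => by simpa using hasDerivAt_pow (k + 1) x)
    (fun x _ => hasDerivAt_sin_mul_div ha x) ((by fun_prop : Continuous _).intervalIntegrable _ _)
    ((by fun_prop : Continuous _).intervalIntegrable _ _), hrest]
  simp

theorem sinMoment_succ (ha : a ≠ 0) (k : ℕ) :
    sinMoment a (k + 1) = -cos a / a + (k + 1) / a * cosMoment a k := by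
  have hrest : ∫ x in (0 : ℝ)..1, (k + 1) * x ^ k * (-cos (a * x) / a)
      = -((k + 1) / a * cosMoment a k) := by
    rw [cosMoment, ← integral_const_mul, ← integral_neg]
    exact integral_congr fun x _ => by ring
  rw [sinMoment, integral_mul_deriv_eq_deriv_mul (fun x _ => by simpa using hasDerivAt_pow (k + 1) x)
    (fun x _ => hasDerivAt_neg_cos_mul_div ha x) ((by fun_prop : Continuous _).intervalIntegrable _ _)
    ((by fun_prop : Continuous _).intervalIntegrable _ _), hrest]
  simp

theorem cosMoment_add_two (ha : a ≠ 0) (n : ℕ) :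
    cosMoment a (n + 2) = sin a / a + (n + 2) * cos a / a ^ 2
      - (n + 2) * (n + 1) / a ^ 2 * cosMoment a n := by
  rw [cosMoment_succ ha, sinMoment_succ ha]
  push_cast
  field_simp
  ring

theorem add_two_div_add_le_div_sub_sq {A n : ℝ} (hn : 0 ≤ n) (hA : (n + 2) ^ 2 < A) :
    (n + 2) / A + (n + 2) * (n + 1) / A * (n / (A - n ^ 2)) ≤ (n + 2) / (A - (n + 2) ^ 2) := by
  have hA₀ : 0 < A := by nlinarith
  have hAn : 0 < A - n ^ 2 := by nlinarith
  have hAn₂ : 0 < A - (n + 2) ^ 2 := by linarith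
  calc (n + 2) / A + (n + 2) * (n + 1) / A * (n / (A - n ^ 2))
      = (n + 2) * (A + n) / (A * (A - n ^ 2)) := by field_simp; ring
    _ ≤ (n + 2) / (A - (n + 2) ^ 2) := by
      rw [div_le_div_iff₀ (by positivity) hAn₂]
      have hgap : (n + 2) * (A * (A - n ^ 2)) - (n + 2) * (A + n) * (A - (n + 2) ^ 2)
          = (n + 2) * ((3 * n + 4) * A + n * (n + 2) ^ 2) := by ring
      have : 0 ≤ (n + 2) * ((3 * n + 4) * A + n * (n + 2) ^ 2) := by positivity
      linarith

theorem abs_cosMoment_le (hs : sin a = 0) {n : ℕ} (hn : Even n)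
    (hna : (n : ℝ) ^ 2 < a ^ 2) : |cosMoment a n| ≤ n / (a ^ 2 - n ^ 2) := by
  induction n using Nat.twoStepInduction with
  | zero =>
    have ha : a ≠ 0 := by rintro rfl; simp at hna
    simp [cosMoment_zero ha, hs]
  | one => exact absurd hn Nat.not_even_one
  | more n ih _ =>
    push_cast at hna ⊢
    have ha : a ≠ 0 := by rintro rfl; nlinarith
    have hI := ih (Nat.even_add.mp hn |>.mpr even_two) (by nlinarith [n.cast_nonneg (α := ℝ)])
    have hc : (0 : ℝ) ≤ (n + 2) * (n + 1) / a ^ 2 := by positivity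
    rw [cosMoment_add_two ha, hs, zero_div, zero_add]
    calc |(n + 2) * cos a / a ^ 2 - (n + 2) * (n + 1) / a ^ 2 * cosMoment a n|
        ≤ |(n + 2) * cos a / a ^ 2| + |(n + 2) * (n + 1) / a ^ 2 * cosMoment a n| := abs_sub _ _
      _ ≤ (n + 2) / a ^ 2 + (n + 2) * (n + 1) / a ^ 2 * (n / (a ^ 2 - n ^ 2)) := by
        gcongr
        · rw [abs_div, abs_mul, abs_of_nonneg (by positivity : (0 : ℝ) ≤ n + 2),
            abs_of_nonneg (sq_nonneg a)]
          gcongr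
          exact mul_le_of_le_one_right (by positivity) (abs_cos_le_one a)
        · rw [abs_mul, abs_of_nonneg hc]
          gcongr
      _ ≤ (n + 2) / (a ^ 2 - (n + 2) ^ 2) := add_two_div_add_le_div_sub_sq n.cast_nonneg hna

end Moments

theorem fourier_cos_coeff_tail_bound_general (t : ℕ) (hteven : Even t)
    (p : ℕ) (hp : (t : ℝ) / Real.pi < p) :
    |2 * ∫ x in (0 : ℝ)..1, x ^ t * Real.cos (p * Real.pi * x)| ≤
      2 * t / ((p : ℝ) ^ 2 * Real.pi ^ 2 - (t : ℝ) ^ 2) := by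
  have htp : (t : ℝ) < p * π := (div_lt_iff₀ pi_pos).mp hp
  have hbound := abs_cosMoment_le (sin_nat_mul_pi p) hteven
    (pow_lt_pow_left₀ htp t.cast_nonneg two_ne_zero)
  rw [abs_mul, abs_two]
  calc 2 * |cosMoment (p * π) t| ≤ 2 * (t / ((p * π) ^ 2 - t ^ 2)) := by gcongr
    _ = 2 * t / (p ^ 2 * π ^ 2 - t ^ 2) := by ring

theorem fourier_cos_coeff_tail_bound (t : ℕ) (ht : 0 < t) (hteven : Even t)
    (p : ℕ) (hp : (t : ℝ) / Real.pi < p) :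
    |2 * ∫ x in (0 : ℝ)..1, x ^ t * Real.cos (p * Real.pi * x)| ≤
      2 * t / ((p : ℝ) ^ 2 * Real.pi ^ 2 - (t : ℝ) ^ 2) :=
  fourier_cos_coeff_tail_bound_general t hteven p hp
end

section
/- For 0 < ε < 2/π and a positive integer t, if N ≥ t/(π·tanh(πε/2)) then (1/π)·log((Nπ + t)/(Nπ − t)) ≤ ε; moreover t/(π·tanh(πε/2)) ≥ 2t/(π²ε). -/
open Real

/-! Writing `c = πε/2`, the hypothesis on `N` says `t/(Nπ) ≤ tanh c`, and
`log((Nπ + t)/(Nπ - t)) = 2 artanh (t/(Nπ)) ≤ 2 artanh (tanh c) = πε` by monotonicity of `artanh`.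
The comparison of the two thresholds is `tanh c ≤ c`. -/

namespace Real

theorem tanh_pos {x : ℝ} (hx : 0 < x) : 0 < tanh x := by
  rw [tanh_eq_sinh_div_cosh]
  exact div_pos (sinh_pos_iff.2 hx) (cosh_pos x)

theorem monotone_mul_cosh_sub_sinh : Monotone fun x : ℝ => x * cosh x - sinh x := by
  have hderiv (x : ℝ) : HasDerivAt (fun x : ℝ => x * cosh x - sinh x) (x * sinh x) x :=
    (((hasDerivAt_id' x).mul (hasDerivAt_cosh x)).sub (hasDerivAt_sinh x)).congr_deriv
      (by ring)
  refine monotone_of_deriv_nonneg (fun x => (hderiv x).differentiableAt) fun x => ?_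
  rw [(hderiv x).deriv]
  rcases le_total 0 x with hx | hx
  · exact mul_nonneg hx (sinh_nonneg_iff.2 hx)
  · exact mul_nonneg_of_nonpos_of_nonpos hx (sinh_nonpos_iff.2 hx)

theorem sinh_le_mul_cosh {x : ℝ} (hx : 0 ≤ x) : sinh x ≤ x * cosh x := by
  simpa using monotone_mul_cosh_sub_sinh hx

theorem tanh_le_self {x : ℝ} (hx : 0 ≤ x) : tanh x ≤ x := by
  rw [tanh_eq_sinh_div_cosh, div_le_iff₀ (cosh_pos x)]
  exact sinh_le_mul_cosh hx

theorem log_add_div_sub_eq_two_mul_artanh {u s : ℝ} (hu : 0 < u) (hs : |s| ≤ u) :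
    log ((u + s) / (u - s)) = 2 * artanh (s / u) := by
  have hsu : s / u ∈ Set.Icc (-1) 1 := by
    rw [Set.mem_Icc, le_div_iff₀ hu, div_le_iff₀ hu]
    constructor <;> linarith [abs_le.1 hs]
  rw [artanh_eq_half_log hsu, ← mul_assoc, mul_one_div_cancel two_ne_zero, one_mul]
  congr 1
  field_simp

theorem log_add_div_sub_le_of_le_mul_tanh {u s c : ℝ} (hu : 0 < u) (hs : -u < s)
    (h : s ≤ u * tanh c) : log ((u + s) / (u - s)) ≤ 2 * c := by
  have hsu : s ≤ u := h.trans (mul_le_of_le_one_right hu.le (tanh_lt_one c).le)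
  rw [log_add_div_sub_eq_two_mul_artanh hu (abs_le.2 ⟨hs.le, hsu⟩)]
  gcongr
  calc artanh (s / u) ≤ artanh (tanh c) :=
        artanh_le_artanh ((lt_div_iff₀ hu).2 (by linarith)) (tanh_lt_one c)
          ((div_le_iff₀ hu).2 (by linarith))
    _ = c := artanh_tanh c

end Real

theorem log_bound_from_tanh_general (ε : ℝ) (hε : 0 < ε)
    (t : ℕ) (ht : 0 < t) (N : ℝ)
    (hN : (t : ℝ) / (Real.pi * Real.tanh (Real.pi * ε / 2)) ≤ N) :
    (1 / Real.pi) * Real.log ((N * Real.pi + t) / (N * Real.pi - t)) ≤ ε ∧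
    2 * (t : ℝ) / (Real.pi ^ 2 * ε) ≤ (t : ℝ) / (Real.pi * Real.tanh (Real.pi * ε / 2)) := by
  have hc : 0 < π * ε / 2 := by positivity
  have hT : 0 < π * tanh (π * ε / 2) := mul_pos pi_pos (tanh_pos hc)
  have ht' : (0 : ℝ) < t := Nat.cast_pos.2 ht
  constructor
  · have hNπ : 0 < N * π := mul_pos ((div_pos ht' hT).trans_le hN) pi_pos
    have htN : (t : ℝ) ≤ N * π * tanh (π * ε / 2) := by
      rw [div_le_iff₀ hT] at hN
      linarith
    calc (1 / π) * log ((N * π + t) / (N * π - t)) ≤ (1 / π) * (2 * (π * ε / 2)) := by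
          gcongr
          exact log_add_div_sub_le_of_le_mul_tanh hNπ (by linarith) htN
      _ = ε := by field_simp
  · calc 2 * (t : ℝ) / (π ^ 2 * ε) = t / (π * (π * ε / 2)) := by field_simp
      _ ≤ t / (π * tanh (π * ε / 2)) :=
        div_le_div_of_nonneg_left ht'.le hT (by gcongr; exact tanh_le_self hc.le)

theorem log_bound_from_tanh (ε : ℝ) (hε : 0 < ε) (hε' : ε < 2 / Real.pi)
    (t : ℕ) (ht : 0 < t) (N : ℝ)
    (hN : (t : ℝ) / (Real.pi * Real.tanh (Real.pi * ε / 2)) ≤ N) :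
    (1 / Real.pi) * Real.log ((N * Real.pi + t) / (N * Real.pi - t)) ≤ ε ∧
    2 * (t : ℝ) / (Real.pi ^ 2 * ε) ≤ (t : ℝ) / (Real.pi * Real.tanh (Real.pi * ε / 2)) :=
  log_bound_from_tanh_general ε hε t ht N hN
end
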